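/- Let M be an even natural number and let A₁ and A₂ be adjacency matrices of simple graphs on M vertices (real symmetric M×M matrices with zero diagonal and entries in {0,1}) having equal characteristic polynomials (isospectral). Then the two graphs are isomorphic, i.e. there exists a permutation σ of Fin M with A₁ i j = A₂ (σ i) (σ j) for all i, j, if and only if for every n : Fin M → ℕ the symmetrized sums agree: ∑_{σ ∈ Perm(Fin M)} haf(A₁ ⊘ J_{n ∘ σ}) = ∑_{σ ∈ Perm(Fin M)} haf(A₂ ⊘ J_{n ∘ σ}). -/

import Mathlib

open scoped Classical in
/-- The hafnian of a matrix: the sum over all partitions of the index type into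
unordered pairs (perfect matchings) of the products of the corresponding entries.
For a symmetric matrix `B` the term `(∑ u ∈ p, ∑ v ∈ p.erase u, B u v) / 2`
equals `B u v` for the pair `p = {u, v}`. -/
noncomputable def hafnian {ι : Type*} [Fintype ι] [DecidableEq ι]
    (B : Matrix ι ι ℝ) : ℝ :=
  ∑ Mch ∈ Finset.univ.filter
      (fun Mch : Finset (Finset ι) =>
        (∀ p ∈ Mch, p.card = 2) ∧ ∀ x : ι, ∃! p, p ∈ Mch ∧ x ∈ p),
    ∏ p ∈ Mch, (∑ u ∈ p, ∑ v ∈ p.erase u, B u v) / 2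

/-- The reduced Kronecker product `A ⊘ J_n`, indexed by `Σ i, Fin (n i)`,
whose `((i,a),(j,b))` entry is `A i j`. -/
def rkron {ι : Type*} (A : Matrix ι ι ℝ) (n : ι → ℕ) :
    Matrix ((i : ι) × Fin (n i)) ((i : ι) × Fin (n i)) ℝ :=
  fun x y => A x.1 y.1

/-!
For symmetric `A`, expanding `(xᵀ A x) ^ N` produces one term for each sequence of `N` ordered
pairs of indices. Grouping these sequences by the multiplicity vector `m` of the indices they
use, and then by the perfect matching of `A ⊘ J_m` they induce, gives
`(xᵀ A x) ^ N = ∑ₘ 2 ^ N N! / ∏ mᵢ! · haf (A ⊘ J_m) · xᵐ`.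
Averaging over the permutations of the variables, the hypothesis therefore says that the
multisets `{(x ∘ σ)ᵀ A₁ (x ∘ σ)}_σ` and `{(x ∘ σ)ᵀ A₂ (x ∘ σ)}_σ` have the same power sums, hence
coincide. So every `x` lies on the zero set of one of the finitely many polynomials
`xᵀ A₁ x - (x ∘ τ)ᵀ A₂ (x ∘ τ)`; one of them is then identically zero, and by polarization
`A₁` is `A₂` relabelled by `τ⁻¹`. The converse is the invariance of the hafnian under relabelling.
-/

open Finset
open scoped Nat

theorem card_equiv_comp_eq {X Y Z : Type*} [Fintype X] [Fintype Y] [Fintype Z]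
    [DecidableEq X] [DecidableEq Y] [DecidableEq Z] {f : X → Z} {g : Y → Z}
    (h : ∀ z, Fintype.card {x // f x = z} = Fintype.card {y // g y = z}) :
    Fintype.card {e : X ≃ Y // g ∘ e = f} = ∏ z, (Fintype.card {x // f x = z})! := by
  let e₀ : X ≃ Y := Equiv.ofFiberEquiv fun z => Fintype.equivOfCardEq (h z)
  have he₀ : g ∘ e₀ = f := funext (Equiv.ofFiberEquiv_map _)
  rw [← DomMulAct.stabilizer_card f]
  refine Fintype.card_congr ((Equiv.refl X).equivCongr e₀.symm |>.subtypeEquiv fun e => ?_)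
  simp only [← he₀, funext_iff, Function.comp_apply, Equiv.equivCongr_apply_apply,
    Equiv.refl_symm, Equiv.refl_apply, Equiv.apply_symm_apply]

theorem Multiset.eq_of_sum_map_pow_eq {K : Type*} [Field K] [CharZero K] {s t : Multiset K}
    (h : ∀ N : ℕ, (s.map (· ^ N)).sum = (t.map (· ^ N)).sum) : s = t := by
  classical
  have hpoly : ∀ p : Polynomial K, (s.map p.eval).sum = (t.map p.eval).sum := by
    intro p
    induction p using Polynomial.induction_on' with
    | add p q hp hq => simp [Multiset.sum_map_add, hp, hq]
    | monomial n a => simp [Multiset.sum_map_mul_left, h n]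
  ext c
  -- `p` vanishes on `s + t` except at `c`, so summing it over `s` or `t` reads off the
  -- multiplicity of `c`.
  let p : Polynomial K := ∏ d ∈ (s + t).toFinset.erase c, (Polynomial.X - Polynomial.C d)
  have hsum : ∀ w ⊆ s + t, (w.map p.eval).sum = w.count c * p.eval c := by
    intro w hw
    rw [Finset.sum_multiset_map_count, sum_eq_single c]
    · exact nsmul_eq_mul _ _
    · intro d hd hdc
      have hd' : d ∈ (s + t).toFinset.erase c :=
        mem_erase.2 ⟨hdc, Multiset.mem_toFinset.2 (hw (Multiset.mem_toFinset.1 hd))⟩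
      rw [Polynomial.eval_prod, Finset.prod_eq_zero hd' (by simp), smul_zero]
    · intro hc
      rw [Multiset.count_eq_zero_of_notMem (by simpa using hc), zero_smul]
  have hc : p.eval c ≠ 0 := by
    rw [Polynomial.eval_prod]
    exact prod_ne_zero_iff.2 fun d hd => by simpa [sub_eq_zero] using (ne_of_mem_erase hd).symm
  have hst := hpoly p
  rw [hsum s (Multiset.subset_of_le (Multiset.le_add_right s t)),
    hsum t (Multiset.subset_of_le (Multiset.le_add_left t s))] at hst
  exact_mod_cast mul_right_cancel₀ hc hst

theorem MvPolynomial.exists_eq_zero_of_forall_exists_eval_eq_zero {σ R α : Type*} [CommRing R]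
    [IsDomain R] [Infinite R] [Fintype α] {P : α → MvPolynomial σ R}
    (h : ∀ x, ∃ a, eval x (P a) = 0) : ∃ a, P a = 0 := by
  have hprod : ∏ a, P a = 0 := MvPolynomial.funext fun x => by
    obtain ⟨a, ha⟩ := h x
    rw [map_prod, map_zero]
    exact prod_eq_zero (mem_univ a) ha
  simpa using prod_eq_zero_iff.1 hprod

section Matchings

variable {ι κ : Type*} {P : Finset (Finset ι)}

def IsPerfectMatching (P : Finset (Finset ι)) : Prop :=
  (∀ p ∈ P, p.card = 2) ∧ ∀ x : ι, ∃! p, p ∈ P ∧ x ∈ p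

theorem IsPerfectMatching.finsetCongr (hP : IsPerfectMatching P) (e : ι ≃ κ) :
    IsPerfectMatching (e.finsetCongr.finsetCongr P) := by
  refine ⟨fun q hq => ?_, fun y => ?_⟩
  · obtain ⟨p, hp, rfl⟩ := mem_map.1 hq
    simpa using hP.1 p hp
  · obtain ⟨p, ⟨hp, hyp⟩, huniq⟩ := hP.2 (e.symm y)
    refine ⟨e.finsetCongr p, ⟨mem_map_of_mem _ hp, by simpa using hyp⟩, ?_⟩
    rintro q ⟨hq, hyq⟩
    obtain ⟨r, hr, rfl⟩ := mem_map.1 hq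
    rw [huniq r ⟨hr, by simpa using hyq⟩]
    rfl

noncomputable def IsPerfectMatching.block (hP : IsPerfectMatching P) (x : ι) : P :=
  ⟨(hP.2 x).exists.choose, (hP.2 x).exists.choose_spec.1⟩

theorem IsPerfectMatching.block_eq_iff (hP : IsPerfectMatching P) {x : ι} {p : P} :
    hP.block x = p ↔ x ∈ (p : Finset ι) := by
  have hx := (hP.2 x).exists.choose_spec
  constructor
  · rintro rfl
    exact hx.2
  · exact fun hxp => Subtype.ext ((hP.2 x).unique hx ⟨p.2, hxp⟩)

variable [DecidableEq ι] [DecidableEq κ]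

theorem IsPerfectMatching.card_block_fiber [Fintype ι] (hP : IsPerfectMatching P) (p : P) :
    Fintype.card {x // hP.block x = p} = 2 := by
  rw [Fintype.card_congr (Equiv.subtypeEquivRight fun x => hP.block_eq_iff),
    Fintype.card_coe, hP.1 p p.2]

theorem IsPerfectMatching.two_mul_card [Fintype ι] (hP : IsPerfectMatching P) :
    2 * Fintype.card P = Fintype.card ι := by
  rw [← Fintype.card_congr (Equiv.sigmaFiberEquiv hP.block), Fintype.card_sigma]
  simp [hP.card_block_fiber, mul_comm]

noncomputable def pairWeight (B : Matrix ι ι ℝ) (p : Finset ι) : ℝ :=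
  (∑ u ∈ p, ∑ v ∈ p.erase u, B u v) / 2

open scoped Classical in
theorem hafnian_eq_sum_isPerfectMatching [Fintype ι] (B : Matrix ι ι ℝ) :
    hafnian B = ∑ P with IsPerfectMatching P, ∏ p ∈ P, pairWeight B p := by
  unfold hafnian
  congr 1
  ext P
  simp only [mem_filter, mem_univ, true_and]
  rfl

theorem pairWeight_pair {B : Matrix ι ι ℝ} (hB : B.IsSymm) {a b : ι} (hab : a ≠ b) :
    pairWeight B {a, b} = B a b := by
  have hba : B b a = B a b := hB.apply a b
  simp [pairWeight, sum_pair hab, erase_insert_of_ne hab, hab, hba]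

theorem pairWeight_submatrix (C : Matrix κ κ ℝ) (e : ι ≃ κ) (p : Finset ι) :
    pairWeight (C.submatrix e e) p = pairWeight C (e.finsetCongr p) := by
  simp only [pairWeight, Equiv.finsetCongr_apply, ← map_erase, sum_map]
  rfl

theorem hafnian_submatrix [Fintype ι] [Fintype κ] (C : Matrix κ κ ℝ) (e : ι ≃ κ) :
    hafnian (C.submatrix e e) = hafnian C := by
  classical
  rw [hafnian_eq_sum_isPerfectMatching, hafnian_eq_sum_isPerfectMatching]
  refine sum_equiv e.finsetCongr.finsetCongr (fun P => ?_) (fun P _ => ?_)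
  · simp only [mem_filter, mem_univ, true_and]
    refine ⟨fun hP => hP.finsetCongr e, fun hP => ?_⟩
    have h := hP.finsetCongr e.symm
    rwa [← Equiv.finsetCongr_symm, ← Equiv.finsetCongr_symm, Equiv.symm_apply_apply] at h
  · simp [Equiv.finsetCongr_apply, prod_map, pairWeight_submatrix]

end Matchings

section EquivMatching

variable {κ : Type*} [DecidableEq κ] {N : ℕ}

def equivPair (e : Fin N × Bool ≃ κ) (k : Fin N) : Finset κ :=
  {e (k, false), e (k, true)}

def matchingOfEquiv (e : Fin N × Bool ≃ κ) : Finset (Finset κ) :=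
  univ.image (equivPair e)

theorem mem_equivPair_iff (e : Fin N × Bool ≃ κ) (u : Fin N × Bool) (k : Fin N) :
    e u ∈ equivPair e k ↔ u.1 = k := by
  obtain ⟨k', b⟩ := u
  cases b <;> simp [equivPair, e.injective.eq_iff]

theorem card_equivPair (e : Fin N × Bool ≃ κ) (k : Fin N) : (equivPair e k).card = 2 :=
  card_pair (by simp [e.injective.eq_iff])

theorem equivPair_injective (e : Fin N × Bool ≃ κ) : Function.Injective (equivPair e) := by
  intro k k' h
  have hk := (mem_equivPair_iff e (k, false) k).2 rfl
  rwa [h, mem_equivPair_iff] at hk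

theorem isPerfectMatching_matchingOfEquiv (e : Fin N × Bool ≃ κ) :
    IsPerfectMatching (matchingOfEquiv e) := by
  refine ⟨fun p hp => ?_, fun x => ?_⟩
  · obtain ⟨k, -, rfl⟩ := mem_image.1 hp
    exact card_equivPair e k
  · have hx : ∀ k, x ∈ equivPair e k ↔ (e.symm x).1 = k := fun k => by
      simpa using mem_equivPair_iff e (e.symm x) k
    refine ⟨equivPair e (e.symm x).1, ⟨mem_image_of_mem _ (mem_univ _), (hx _).2 rfl⟩, ?_⟩
    rintro q ⟨hq, hxq⟩
    obtain ⟨k, -, rfl⟩ := mem_image.1 hq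
    rw [(hx k).1 hxq]

theorem prod_pairWeight_matchingOfEquiv {B : Matrix κ κ ℝ} (hB : B.IsSymm)
    (e : Fin N × Bool ≃ κ) :
    ∏ p ∈ matchingOfEquiv e, pairWeight B p = ∏ k, B (e (k, false)) (e (k, true)) := by
  rw [matchingOfEquiv, prod_image fun k _ k' _ h => equivPair_injective e h]
  exact prod_congr rfl fun k _ => pairWeight_pair hB (by simp [e.injective.eq_iff])

variable {Q : Finset (Finset κ)}

theorem IsPerfectMatching.block_comp_eq_iff (hQ : IsPerfectMatching Q) (e : Fin N × Bool ≃ κ)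
    (ρ : Fin N → Q) : hQ.block ∘ e = ρ ∘ Prod.fst ↔ ∀ k, equivPair e k = ρ k := by
  simp only [funext_iff, Function.comp_apply, hQ.block_eq_iff]
  constructor
  · intro h k
    refine eq_of_subset_of_card_le (fun x hx => ?_) (by rw [card_equivPair, hQ.1 _ (ρ k).2])
    obtain ⟨u, rfl⟩ := e.surjective x
    rw [mem_equivPair_iff] at hx
    exact hx ▸ h u
  · intro h u
    rw [← h, mem_equivPair_iff]

theorem card_fst_fiber (ρ : Fin N ≃ Q) (q : Q) :
    Fintype.card {u : Fin N × Bool // (ρ ∘ Prod.fst) u = q} = 2 := by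
  refine (Fintype.card_congr ?_).trans Fintype.card_bool
  exact { toFun := fun u => u.1.2
          invFun := fun b => ⟨(ρ.symm q, b), by simp⟩
          left_inv := by rintro ⟨⟨k, b⟩, rfl⟩; simp
          right_inv := fun b => rfl }

/-- An equivalence inducing `Q` is an enumeration `ρ` of the pairs of `Q` together with an
orientation of each pair. -/
noncomputable def IsPerfectMatching.matchingOfEquivFiberEquiv (hQ : IsPerfectMatching Q) :
    {e : Fin N × Bool ≃ κ // matchingOfEquiv e = Q} ≃
      Σ ρ : Fin N ≃ Q, {e : Fin N × Bool ≃ κ // hQ.block ∘ e = ρ ∘ Prod.fst} where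
  toFun := fun ⟨e, he⟩ =>
    have mem : ∀ k, equivPair e k ∈ Q := fun k => by
      rw [← he]
      exact mem_image_of_mem _ (mem_univ k)
    ⟨Equiv.ofBijective (fun k => ⟨equivPair e k, mem k⟩)
      ⟨fun k k' h => equivPair_injective e (congrArg Subtype.val h), fun q => by
        have hq : (q : Finset κ) ∈ matchingOfEquiv e := he ▸ q.2
        obtain ⟨k, -, hk⟩ := mem_image.1 hq
        exact ⟨k, Subtype.ext hk⟩⟩,
      e, (hQ.block_comp_eq_iff e _).2 fun k => rfl⟩
  invFun := fun ⟨ρ, e, he⟩ => ⟨e, by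
    have hρ := (hQ.block_comp_eq_iff e ρ).1 he
    ext q
    simp only [matchingOfEquiv, mem_image, mem_univ, true_and, hρ]
    exact ⟨fun ⟨k, hk⟩ => hk ▸ (ρ k).2, fun hq => ⟨ρ.symm ⟨q, hq⟩, by simp⟩⟩⟩
  left_inv := fun ⟨e, he⟩ => rfl
  right_inv := fun ⟨ρ, e, he⟩ => Sigma.subtype_ext
    (Equiv.ext fun k => Subtype.ext ((hQ.block_comp_eq_iff e ρ).1 he k)) rfl

variable [Fintype κ]

theorem card_matchingOfEquiv_eq (hκ : Fintype.card κ = 2 * N) (hQ : IsPerfectMatching Q) :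
    Fintype.card {e : Fin N × Bool ≃ κ // matchingOfEquiv e = Q} = 2 ^ N * N ! := by
  have hQN : Fintype.card Q = N := by
    have := hQ.two_mul_card
    omega
  have hfibre : ∀ ρ : Fin N ≃ Q,
      Fintype.card {e : Fin N × Bool ≃ κ // hQ.block ∘ e = ρ ∘ Prod.fst} = 2 ^ N := by
    intro ρ
    rw [card_equiv_comp_eq fun q => by rw [card_fst_fiber, hQ.card_block_fiber]]
    simp only [card_fst_fiber, prod_const, card_univ, hQN, Nat.factorial_two]
  have hρ : Fintype.card (Fin N ≃ Q) = N ! := by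
    rw [Fintype.card_equiv (Fintype.equivOfCardEq (α := Fin N) (β := Q) (by simp [hQN])),
      Fintype.card_fin]
  rw [Fintype.card_congr hQ.matchingOfEquivFiberEquiv, Fintype.card_sigma,
    sum_congr rfl fun ρ _ => hfibre ρ, sum_const, card_univ, hρ, smul_eq_mul, mul_comm]

theorem sum_equiv_prod_eq_hafnian {B : Matrix κ κ ℝ} (hB : B.IsSymm)
    (hκ : Fintype.card κ = 2 * N) :
    ∑ e : Fin N × Bool ≃ κ, ∏ k, B (e (k, false)) (e (k, true)) = 2 ^ N * N ! * hafnian B := by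
  classical
  rw [hafnian_eq_sum_isPerfectMatching, mul_sum, ← sum_fiberwise_of_maps_to
    (g := matchingOfEquiv) (t := {P | IsPerfectMatching P})
    (fun e _ => by simpa using isPerfectMatching_matchingOfEquiv e)]
  refine sum_congr rfl fun Q hQ => ?_
  calc ∑ e with matchingOfEquiv e = Q, ∏ k, B (e (k, false)) (e (k, true))
      = ∑ e with matchingOfEquiv e = Q, ∏ p ∈ Q, pairWeight B p :=
        sum_congr rfl fun e he => by rw [← (mem_filter.1 he).2, prod_pairWeight_matchingOfEquiv hB]
    _ = 2 ^ N * N ! * ∏ p ∈ Q, pairWeight B p := by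
        rw [sum_const, ← Fintype.card_subtype, card_matchingOfEquiv_eq hκ (mem_filter.1 hQ).2,
          nsmul_eq_mul]
        push_cast
        ring

end EquivMatching

section FiberCard

variable {ι : Type*} [DecidableEq ι] {α : Type*} [Fintype α]

def fiberCard (h : α → ι) (i : ι) : ℕ :=
  Fintype.card {a // h a = i}

theorem sum_fiberCard [Fintype ι] (h : α → ι) :
    ∑ i, fiberCard h i = Fintype.card α := by
  rw [← Fintype.card_congr (Equiv.sigmaFiberEquiv h), Fintype.card_sigma]
  rfl

theorem prod_pow_fiberCard [Fintype ι] (h : α → ι) (x : ι → ℝ) :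
    ∏ a, x (h a) = ∏ i, x i ^ fiberCard h i := by
  rw [← prod_fiberwise univ h]
  refine prod_congr rfl fun i _ => ?_
  rw [prod_congr rfl fun a ha => by rw [(mem_filter.1 ha).2], prod_const, fiberCard,
    Fintype.card_subtype]

theorem fiberCard_sigma_fst_comp {m : ι → ℕ} (e : α ≃ Σ i, Fin (m i)) :
    fiberCard (Sigma.fst ∘ e) = m := by
  funext i
  exact (Fintype.card_congr ((e.subtypeEquiv (q := fun t => t.1 = i) fun _ => Iff.rfl).trans
    (Equiv.sigmaSubtype i))).trans (Fintype.card_fin _)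

theorem sum_equiv_sigma_fst [Fintype ι] [DecidableEq α] (m : ι → ℕ)
    (F : (α → ι) → ℝ) :
    ∑ e : α ≃ Σ i, Fin (m i), F (Sigma.fst ∘ e) =
      (∏ i, ((m i)! : ℝ)) * ∑ h with fiberCard h = m, F h := by
  rw [← sum_fiberwise_of_maps_to (g := fun e : α ≃ Σ i, Fin (m i) => Sigma.fst ∘ e)
    (t := {h | fiberCard h = m}) (fun e _ => by simp [fiberCard_sigma_fst_comp]), mul_sum]
  refine sum_congr rfl fun h hh => ?_
  have hm : fiberCard h = m := (mem_filter.1 hh).2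
  have hcard : Fintype.card {e : α ≃ Σ i, Fin (m i) // Sigma.fst ∘ e = h} = ∏ i, (m i)! := by
    rw [card_equiv_comp_eq fun i => ?_, ← hm]
    · rfl
    · rw [Fintype.card_congr (Equiv.sigmaSubtype i), Fintype.card_fin, ← hm]
      rfl
  rw [sum_congr rfl fun e he => by rw [(mem_filter.1 he).2], sum_const, ← Fintype.card_subtype,
    hcard, nsmul_eq_mul]
  push_cast
  ring

end FiberCard

section QuadraticForm

variable {ι κ : Type*} [Fintype ι] [Fintype κ]

def quadForm (A : Matrix ι ι ℝ) (x : ι → ℝ) : ℝ :=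
  ∑ i, ∑ j, A i j * x i * x j

theorem quadForm_comp_equiv (A : Matrix κ κ ℝ) (e : κ ≃ ι) (x : ι → ℝ) :
    quadForm A (x ∘ e) = quadForm (A.submatrix e.symm e.symm) x := by
  simp only [quadForm, Function.comp_apply, Matrix.submatrix_apply]
  rw [← e.symm.sum_comp]
  refine sum_congr rfl fun i _ => ?_
  rw [← e.symm.sum_comp]
  simp

def pairProduct (A : Matrix ι ι ℝ) {N : ℕ} (h : Fin N × Bool → ι) : ℝ :=
  ∏ k, A (h (k, false)) (h (k, true))

theorem quadForm_pow (A : Matrix ι ι ℝ) (x : ι → ℝ) (N : ℕ) :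
    quadForm A x ^ N = ∑ h : Fin N × Bool → ι, pairProduct A h * ∏ u, x (h u) := by
  have hq : quadForm A x = ∑ p : ι × ι, A p.1 p.2 * x p.1 * x p.2 := by
    rw [quadForm, Fintype.sum_prod_type]
  let pairs : (Fin N × Bool → ι) ≃ (Fin N → ι × ι) :=
    (Equiv.curry _ _ _).trans (Equiv.arrowCongr (Equiv.refl _) (Equiv.boolArrowEquivProd ι))
  rw [hq, Fintype.sum_pow]
  refine Fintype.sum_equiv pairs.symm _ _ fun p => ?_
  simp only [pairProduct, Fintype.prod_prod_type, Fintype.prod_bool, ← prod_mul_distrib]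
  exact prod_congr rfl fun k _ => by simp [pairs]; ring

noncomputable def quadPoly (A : Matrix ι ι ℝ) : MvPolynomial ι ℝ :=
  ∑ i, ∑ j, MvPolynomial.C (A i j) * MvPolynomial.X i * MvPolynomial.X j

theorem eval_quadPoly (A : Matrix ι ι ℝ) (x : ι → ℝ) :
    MvPolynomial.eval x (quadPoly A) = quadForm A x := by
  simp [quadPoly, quadForm]

variable [DecidableEq ι]

theorem quadForm_single (A : Matrix ι ι ℝ) (i : ι) : quadForm A (Pi.single i 1) = A i i := by
  simp [quadForm, Pi.single_apply]

theorem quadForm_single_add_single (A : Matrix ι ι ℝ) (i j : ι) :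
    quadForm A (Pi.single i 1 + Pi.single j 1) = A i i + A i j + A j i + A j j := by
  simp [quadForm, Pi.single_apply, mul_add, sum_add_distrib]
  ring

theorem Matrix.IsSymm.eq_of_quadForm_eq {A B : Matrix ι ι ℝ} (hA : A.IsSymm) (hB : B.IsSymm)
    (h : ∀ x, quadForm A x = quadForm B x) : A = B := by
  ext i j
  have hi := h (Pi.single i 1)
  have hj := h (Pi.single j 1)
  have hij := h (Pi.single i 1 + Pi.single j 1)
  simp only [quadForm_single, quadForm_single_add_single, hA.apply i j, hB.apply i j] at hi hj hij
  linarith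

theorem exists_perm_forall_quadForm_eq {A₁ A₂ : Matrix ι ι ℝ}
    (h : ∀ x, ∃ σ : Equiv.Perm ι, quadForm A₁ x = quadForm A₂ (x ∘ σ)) :
    ∃ σ : Equiv.Perm ι, ∀ x, quadForm A₁ x = quadForm A₂ (x ∘ σ) := by
  have heval : ∀ (σ : Equiv.Perm ι) x, MvPolynomial.eval x
      (quadPoly A₁ - MvPolynomial.rename σ (quadPoly A₂)) = quadForm A₁ x - quadForm A₂ (x ∘ σ) :=
    fun σ x => by simp [MvPolynomial.eval_rename, eval_quadPoly]
  obtain ⟨σ, hσ⟩ := MvPolynomial.exists_eq_zero_of_forall_exists_eval_eq_zero fun x =>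
    (h x).imp fun σ hσ => by rw [heval, hσ, sub_self]
  exact ⟨σ, fun x => sub_eq_zero.1 (by rw [← heval, hσ, map_zero])⟩

theorem exists_perm_quadForm_eq_of_sum_pow_eq {A₁ A₂ : Matrix ι ι ℝ} {x : ι → ℝ}
    (h : ∀ N, ∑ σ : Equiv.Perm ι, quadForm A₁ (x ∘ σ) ^ N =
      ∑ σ : Equiv.Perm ι, quadForm A₂ (x ∘ σ) ^ N) :
    ∃ σ : Equiv.Perm ι, quadForm A₁ x = quadForm A₂ (x ∘ σ) := by
  have hvalues : univ.val.map (fun σ : Equiv.Perm ι => quadForm A₁ (x ∘ σ)) =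
      univ.val.map (fun σ : Equiv.Perm ι => quadForm A₂ (x ∘ σ)) :=
    Multiset.eq_of_sum_map_pow_eq fun N => by simpa [Multiset.map_map] using h N
  have hx : quadForm A₁ x ∈ univ.val.map (fun σ : Equiv.Perm ι => quadForm A₁ (x ∘ σ)) :=
    Multiset.mem_map.2 ⟨1, mem_univ _, rfl⟩
  rw [hvalues] at hx
  obtain ⟨σ, -, hσ⟩ := Multiset.mem_map.1 hx
  exact ⟨σ, hσ.symm⟩

end QuadraticForm

theorem Matrix.IsSymm.rkron {ι : Type*} {A : Matrix ι ι ℝ} (hA : A.IsSymm) (n : ι → ℕ) :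
    (rkron A n).IsSymm :=
  Matrix.IsSymm.ext fun x y => hA.apply x.1 y.1

section ReducedKronecker

variable {ι κ : Type*} [Fintype ι] [Fintype κ] [DecidableEq ι] [DecidableEq κ]

theorem hafnian_rkron_submatrix (A : Matrix ι ι ℝ) (e : κ ≃ ι) (n : κ → ℕ) :
    hafnian (rkron (A.submatrix e e) n) = hafnian (rkron A (n ∘ e.symm)) := by
  rw [← hafnian_submatrix (rkron A (n ∘ e.symm))
    (Equiv.sigmaCongrLeft' (β := fun k => Fin (n k)) e)]
  rfl

theorem sum_perm_hafnian_rkron_submatrix (A : Matrix ι ι ℝ) (σ : Equiv.Perm ι) (n : ι → ℕ) :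
    ∑ τ : Equiv.Perm ι, hafnian (rkron (A.submatrix σ σ) (n ∘ τ)) =
      ∑ τ : Equiv.Perm ι, hafnian (rkron A (n ∘ τ)) := by
  simp only [hafnian_rkron_submatrix]
  exact Fintype.sum_equiv (Equiv.mulRight σ⁻¹) _ _ fun τ => rfl

end ReducedKronecker

section HafnianExpansion

variable {ι : Type*} [Fintype ι] [DecidableEq ι]

theorem quadForm_pow_eq_sum_fiberCard (A : Matrix ι ι ℝ) (x : ι → ℝ) (N : ℕ) :
    quadForm A x ^ N = ∑ m ∈ univ.image (fiberCard (α := Fin N × Bool)),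
      (∑ h : Fin N × Bool → ι with fiberCard h = m, pairProduct A h) * ∏ i, x i ^ m i := by
  rw [quadForm_pow, ← sum_fiberwise_of_maps_to (g := fiberCard) (t := univ.image fiberCard)
    fun h _ => mem_image_of_mem _ (mem_univ h)]
  refine sum_congr rfl fun m _ => ?_
  rw [sum_mul]
  exact sum_congr rfl fun h hh => by rw [prod_pow_fiberCard, (mem_filter.1 hh).2]

theorem factorial_mul_sum_pairProduct {A : Matrix ι ι ℝ} (hA : A.IsSymm) {N : ℕ} {m : ι → ℕ}
    (hm : ∑ i, m i = 2 * N) :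
    (∏ i, ((m i)! : ℝ)) * ∑ h : Fin N × Bool → ι with fiberCard h = m, pairProduct A h =
      2 ^ N * N ! * hafnian (rkron A m) := by
  rw [← sum_equiv_sigma_fst m (pairProduct A)]
  exact sum_equiv_prod_eq_hafnian (hA.rkron m) (by simp [hm])

theorem quadForm_pow_eq_sum_hafnian {A : Matrix ι ι ℝ} (hA : A.IsSymm) (x : ι → ℝ) (N : ℕ) :
    quadForm A x ^ N = ∑ m ∈ univ.image (fiberCard (α := Fin N × Bool)),
      2 ^ N * N ! / (∏ i, ((m i)! : ℝ)) * hafnian (rkron A m) * ∏ i, x i ^ m i := by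
  rw [quadForm_pow_eq_sum_fiberCard]
  refine sum_congr rfl fun m hm => ?_
  obtain ⟨h, -, rfl⟩ := mem_image.1 hm
  have hfac : ∏ i, ((fiberCard h i)! : ℝ) ≠ 0 := prod_ne_zero_iff.2 fun i _ => by positivity
  rw [div_mul_eq_mul_div, ← factorial_mul_sum_pairProduct hA (N := N) (m := fiberCard h)
    (by simp [sum_fiberCard, mul_comm])]
  field_simp

theorem sum_perm_quadForm_pow {A : Matrix ι ι ℝ} (hA : A.IsSymm) (x : ι → ℝ) (N : ℕ) :
    ∑ σ : Equiv.Perm ι, quadForm A (x ∘ σ) ^ N =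
      ∑ m ∈ univ.image (fiberCard (α := Fin N × Bool)), 2 ^ N * N ! / (∏ i, ((m i)! : ℝ)) *
        (∑ σ : Equiv.Perm ι, hafnian (rkron A (m ∘ σ))) * ∏ i, x i ^ m i := by
  simp only [quadForm_comp_equiv, quadForm_pow_eq_sum_hafnian (hA.submatrix _),
    hafnian_rkron_submatrix, Equiv.symm_symm, mul_sum, sum_mul]
  exact sum_comm

end HafnianExpansion

theorem stmt_13_general (M : ℕ) (A₁ A₂ : Matrix (Fin M) (Fin M) ℝ)
    (hA₁symm : A₁.IsSymm) (hA₂symm : A₂.IsSymm) :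
    (∃ σ : Equiv.Perm (Fin M), ∀ i j, A₁ i j = A₂ (σ i) (σ j)) ↔
      ∀ n : Fin M → ℕ,
        ∑ σ : Equiv.Perm (Fin M), hafnian (rkron A₁ (n ∘ σ)) =
          ∑ σ : Equiv.Perm (Fin M), hafnian (rkron A₂ (n ∘ σ)) := by
  constructor
  · rintro ⟨σ, hσ⟩ n
    rw [show A₁ = A₂.submatrix σ σ from Matrix.ext hσ, sum_perm_hafnian_rkron_submatrix]
  · intro h
    obtain ⟨τ, hτ⟩ := exists_perm_forall_quadForm_eq (A₁ := A₁) (A₂ := A₂) fun x =>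
      exists_perm_quadForm_eq_of_sum_pow_eq fun N => by
        simp only [sum_perm_quadForm_pow hA₁symm, sum_perm_quadForm_pow hA₂symm, h]
    have hA : A₁ = A₂.submatrix τ.symm τ.symm :=
      hA₁symm.eq_of_quadForm_eq (hA₂symm.submatrix _) fun x => (hτ x).trans (quadForm_comp_equiv ..)
    exact ⟨τ.symm, fun i j => by rw [hA, Matrix.submatrix_apply]⟩

theorem stmt_13 (M : ℕ) (hM : Even M) (A₁ A₂ : Matrix (Fin M) (Fin M) ℝ)
    (hA₁symm : A₁.IsSymm) (hA₁diag : ∀ i, A₁ i i = 0)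
    (hA₁01 : ∀ i j, A₁ i j = 0 ∨ A₁ i j = 1)
    (hA₂symm : A₂.IsSymm) (hA₂diag : ∀ i, A₂ i i = 0)
    (hA₂01 : ∀ i j, A₂ i j = 0 ∨ A₂ i j = 1)
    (hspec : A₁.charpoly = A₂.charpoly) :
    (∃ σ : Equiv.Perm (Fin M), ∀ i j, A₁ i j = A₂ (σ i) (σ j)) ↔
      ∀ n : Fin M → ℕ,
        ∑ σ : Equiv.Perm (Fin M), hafnian (rkron A₁ (n ∘ σ)) =
          ∑ σ : Equiv.Perm (Fin M), hafnian (rkron A₂ (n ∘ σ)) :=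
  stmt_13_general M A₁ A₂ hA₁symm hA₂symm
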